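/- arXiv:1506.08243 — 5 statements merged into one kernel-verified Lean document; each statement's English description precedes it below -/
import Mathlib

section
/- Let A be an m×n real matrix all of whose entries lie in {-1, 0, +1}. Then the following are equivalent: (i) for all integral vectors a, b ∈ ℤ^m and c, d ∈ ℤ^n, every extreme point of the polyhedron {x ∈ ℝ^n : c ≤ x ≤ d (componentwise), a ≤ Ax ≤ b (componentwise)} has all integer coordinates; (ii) for each nonempty collection C of columns of A there exist two disjoint subsets C₁ and C₂ with C₁ ∪ C₂ = C such that the sum of the columns in C₁ minus the sum of the columns in C₂ is a vector all of whose entries lie in {-1, 0, +1}. -/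
/-!
(ii) ⇒ (i). Let `D` be a square submatrix of `A`; the partition property passes to `D`, so by
induction every proper minor of `D` lies in `{-1, 0, 1}`. Then the column `b` of `adj D` with
`D b = det D • e₁` is a `{-1, 0, 1}`-vector, and partitioning its support yields a
`{-1, 0, 1}`-vector `y ≡ b (mod 2)` with `D y ∈ {-1, 0, 1}ᵏ`. Parity forces `D y = ε e₁`, and
`det D • y = adj D (D y) = ε b` read at an entry where `b = ±1` gives `|det D| = |ε| ≤ 1`.
So `A` is totally unimodular, hence so is `[I; A]`, and each vertex of the polyhedron, being
the solution of a nonsingular square tight subsystem, is integral by Cramer's rule.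

(i) ⇒ (ii). For a set `C` of columns, the polytope `0 ≤ x ≤ 1_C`,
`⌊A 1_C / 2⌋ ≤ A x ≤ ⌈A 1_C / 2⌉` contains `1_C / 2`, so it has a vertex. That vertex is
integral, hence the indicator of some `C₁ ⊆ C`, and `2 A 1_{C₁} - A 1_C`, which is the signed
column sum of the partition `C₁, C \ C₁`, has entries in `{-1, 0, 1}`.
-/

open Matrix Filter Topology

theorem SignType.mem_range_cast_iff {R : Type*} [Zero R] [One R] [Neg R] (x : R) :
    x ∈ Set.range SignType.cast ↔ x = -1 ∨ x = 0 ∨ x = 1 := by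
  rw [SignType.range_eq]
  simp only [Set.mem_insert_iff, Set.mem_singleton_iff]
  tauto

theorem SignType.intCast_mem_range_cast_iff {R : Type*} [AddGroupWithOne R] [CharZero R] (z : ℤ) :
    (z : R) ∈ Set.range SignType.cast ↔ z ∈ Set.range SignType.cast := by
  simp only [SignType.mem_range_cast_iff]
  norm_cast

namespace Matrix

variable {m n R : Type*}

def IsGhouilaHouri [Ring R] [DecidableEq n] (A : Matrix m n R) : Prop :=
  ∀ C : Finset n, C.Nonempty → ∃ C₁ C₂ : Finset n, C₁ ∪ C₂ = C ∧ Disjoint C₁ C₂ ∧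
    ∀ i, ∑ j ∈ C₁, A i j - ∑ j ∈ C₂, A i j ∈ Set.range SignType.cast

theorem isGhouilaHouri_map_intCast_iff [Ring R] [CharZero R] [DecidableEq n] (Z : Matrix m n ℤ) :
    (Z.map (Int.cast : ℤ → R)).IsGhouilaHouri ↔ Z.IsGhouilaHouri := by
  simp only [IsGhouilaHouri, map_apply, ← Int.cast_sum, ← Int.cast_sub,
    SignType.intCast_mem_range_cast_iff]

theorem IsGhouilaHouri.submatrix [Ring R] {m' n' : Type*} [DecidableEq n] [DecidableEq n']
    {A : Matrix m n R} (hA : A.IsGhouilaHouri) (f : m' → m) {g : n' → n}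
    (hg : g.Injective) : (A.submatrix f g).IsGhouilaHouri := by
  intro C hC
  obtain ⟨C₁, C₂, hunion, hdisj, hsum⟩ := hA (C.map ⟨g, hg⟩) (hC.map)
  refine ⟨C₁.preimage g hg.injOn, C₂.preimage g hg.injOn, ?_, Finset.disjoint_preimage hdisj,
    fun i => ?_⟩
  · ext j
    rw [Finset.mem_union, Finset.mem_preimage, Finset.mem_preimage, ← Finset.mem_union, hunion]
    exact Finset.mem_map' ⟨g, hg⟩
  · have hpull : ∀ C' ⊆ C.map ⟨g, hg⟩,
        ∑ j ∈ C'.preimage g hg.injOn, A (f i) (g j) = ∑ j ∈ C', A (f i) j := by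
      refine fun C' hC' => Finset.sum_preimage _ _ _ _ fun j hj hjg => ?_
      obtain ⟨j', -, rfl⟩ := Finset.mem_map.mp (hC' hj)
      exact absurd ⟨j', rfl⟩ hjg
    simp only [submatrix_apply]
    rw [hpull C₁ (hunion ▸ Finset.subset_union_left), hpull C₂ (hunion ▸ Finset.subset_union_right)]
    exact hsum (f i)

theorem mulVec_boole_apply [NonAssocSemiring R] [Fintype n] [DecidableEq n] (A : Matrix m n R)
    (s : Finset n) (i : m) : (A *ᵥ fun j => if j ∈ s then 1 else 0) i = ∑ j ∈ s, A i j := by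
  simp [mulVec, dotProduct, Finset.sum_ite_mem]

theorem IsGhouilaHouri.exists_modEq_mulVec_mem_range [Fintype n] [DecidableEq n]
    {A : Matrix m n ℤ} (hA : A.IsGhouilaHouri) (b : n → ℤ) :
    ∃ y : n → ℤ, (∀ j, y j ≡ b j [ZMOD 2]) ∧ (∀ j, y j ∈ Set.range SignType.cast) ∧
      ∀ i, (A *ᵥ y) i ∈ Set.range SignType.cast := by
  rcases (Finset.univ.filter fun j => b j % 2 = 1).eq_empty_or_nonempty with hC | hC
  · refine ⟨0, fun j => ?_, fun j => ⟨0, rfl⟩, fun i => ⟨0, by simp⟩⟩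
    have := Finset.filter_eq_empty_iff.mp hC (Finset.mem_univ j)
    simp only [Int.ModEq, Pi.zero_apply]
    omega
  obtain ⟨C₁, C₂, hunion, hdisj, hsum⟩ := hA _ hC
  refine ⟨(fun j => if j ∈ C₁ then 1 else 0) - (fun j => if j ∈ C₂ then 1 else 0), fun j => ?_,
    fun j => ?_, fun i => ?_⟩
  · have hj : j ∈ C₁ ∨ j ∈ C₂ ↔ b j % 2 = 1 := by simpa using congrArg (j ∈ ·) hunion
    have : j ∈ C₁ → j ∉ C₂ := fun h => Finset.disjoint_left.mp hdisj h
    by_cases h₁ : j ∈ C₁ <;> by_cases h₂ : j ∈ C₂ <;> simp [Int.ModEq, h₁, h₂] at hj this ⊢ <;>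
      omega
  · have : j ∈ C₁ → j ∉ C₂ := fun h => Finset.disjoint_left.mp hdisj h
    rw [SignType.mem_range_cast_iff]
    by_cases h₁ : j ∈ C₁ <;> by_cases h₂ : j ∈ C₂ <;> simp_all
  · rw [mulVec_sub, Pi.sub_apply, mulVec_boole_apply, mulVec_boole_apply]
    exact hsum i

theorem IsGhouilaHouri.det_mem_range_of_adjugate [Fintype n] [DecidableEq n]
    {D : Matrix n n ℤ} (hD : D.IsGhouilaHouri)
    (hadj : ∀ i j, D.adjugate i j ∈ Set.range SignType.cast) :
    D.det ∈ Set.range SignType.cast := by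
  by_cases hdet : D.det = 0
  · exact ⟨0, hdet.symm⟩
  rcases isEmpty_or_nonempty n with hn | ⟨⟨i₀⟩⟩
  · exact ⟨1, by simp⟩
  set b : n → ℤ := fun j => D.adjugate j i₀
  have hDb : D *ᵥ b = Pi.single i₀ D.det := by
    rw [show b = D.adjugate *ᵥ Pi.single i₀ 1 by ext j; simp [b, mulVec_single],
      mulVec_mulVec, mul_adjugate, smul_mulVec, one_mulVec, ← Pi.single_smul, smul_eq_mul, mul_one]
  obtain ⟨y, hyb, hy, hDy⟩ := hD.exists_modEq_mulVec_mem_range b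
  have hDy_single : D *ᵥ y = Pi.single i₀ ((D *ᵥ y) i₀) := by
    ext i
    rcases eq_or_ne i i₀ with rfl | hi
    · simp
    have heven : (D *ᵥ y) i ≡ (D *ᵥ b) i [ZMOD 2] :=
      Int.ModEq.sum fun j _ => (hyb j).mul_left (D i j)
    rw [hDb, Pi.single_eq_of_ne hi] at heven
    rw [Pi.single_eq_of_ne hi]
    have := (SignType.mem_range_cast_iff _).mp (hDy i)
    simp only [Int.ModEq] at heven
    omega
  have hdety : D.det • y = (D *ᵥ y) i₀ • b := by
    calc D.det • y = D.adjugate *ᵥ (D *ᵥ y) := by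
          rw [mulVec_mulVec, adjugate_mul, smul_mulVec, one_mulVec]
      _ = (D *ᵥ y) i₀ • b := by
          rw [hDy_single]
          ext j
          simp [mulVec_single, b, mul_comm]
  obtain ⟨j₀, hj₀⟩ : ∃ j, b j ≠ 0 := by
    by_contra! hb
    apply hdet
    simpa [show b = 0 from funext hb] using (congrFun hDb i₀).symm
  have hb₀ : b j₀ = -1 ∨ b j₀ = 1 := by
    have := (SignType.mem_range_cast_iff (b j₀)).mp (hadj j₀ i₀)
    omega
  have hy₀ : y j₀ = -1 ∨ y j₀ = 1 := by
    have := (SignType.mem_range_cast_iff _).mp (hy j₀)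
    have := hyb j₀
    simp only [Int.ModEq] at this
    omega
  have key : D.det * y j₀ = (D *ᵥ y) i₀ * b j₀ := congrFun hdety j₀
  have hε := (SignType.mem_range_cast_iff _).mp (hDy i₀)
  rw [SignType.mem_range_cast_iff]
  rcases hb₀ with h | h <;> rcases hy₀ with h' | h' <;> rw [h, h'] at key <;> omega

theorem IsGhouilaHouri.det_mem_range :
    ∀ {k : ℕ} {D : Matrix (Fin k) (Fin k) ℤ}, D.IsGhouilaHouri → D.det ∈ Set.range SignType.cast
  | 0, _, _ => ⟨1, by simp⟩
  | k + 1, D, hD => hD.det_mem_range_of_adjugate fun i j => by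
      obtain ⟨s, hs⟩ :=
        (hD.submatrix j.succAbove (Fin.succAbove_right_injective (p := i))).det_mem_range
      rw [adjugate_fin_succ_eq_det_submatrix, ← hs]
      rcases neg_one_pow_eq_or ℤ (j + i : ℕ) with h | h <;> rw [h]
      · exact ⟨s, by simp⟩
      · exact ⟨-s, by simp⟩

theorem IsGhouilaHouri.isTotallyUnimodular [DecidableEq n] {A : Matrix m n ℤ}
    (hA : A.IsGhouilaHouri) : A.IsTotallyUnimodular :=
  fun _ f _ _ hg => (hA.submatrix f hg).det_mem_range

section Polyhedron

variable {ι : Type*} [Fintype n]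

theorem eq_zero_of_mem_extremePoints [Finite ι] {M : Matrix ι n ℝ} {l u : ι → ℝ} {x y : n → ℝ}
    (hx : x ∈ Set.extremePoints ℝ {x | ∀ r, l r ≤ (M *ᵥ x) r ∧ (M *ᵥ x) r ≤ u r})
    (hy : ∀ r, (M *ᵥ x) r = l r ∨ (M *ᵥ x) r = u r → (M *ᵥ y) r = 0) : y = 0 := by
  set P := {x | ∀ r, l r ≤ (M *ᵥ x) r ∧ (M *ᵥ x) r ≤ u r}
  have hline : ∀ᶠ t in 𝓝 (0 : ℝ), x + t • y ∈ P := by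
    simp only [P, Set.mem_ofPred_eq, mulVec_add, mulVec_smul, Pi.add_apply, Pi.smul_apply,
      smul_eq_mul]
    refine Filter.eventually_all.mpr fun r => ?_
    by_cases htight : (M *ᵥ x) r = l r ∨ (M *ᵥ x) r = u r
    · simp [hy r htight, hx.1 r]
    push Not at htight
    have hlim : Tendsto (fun t : ℝ => (M *ᵥ x) r + t * (M *ᵥ y) r) (𝓝 0) (𝓝 ((M *ᵥ x) r)) :=
      (continuous_const.add (continuous_id.mul continuous_const)).tendsto' 0 _ (by simp)
    exact (hlim.eventually (Ioo_mem_nhds ((hx.1 r).1.lt_of_ne htight.1.symm)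
      ((hx.1 r).2.lt_of_ne htight.2))).mono fun t ht => ⟨ht.1.le, ht.2.le⟩
  have hboth : ∀ᶠ t in 𝓝 (0 : ℝ), x + t • y ∈ P ∧ x + (-t) • y ∈ P :=
    hline.and ((continuous_neg.tendsto' 0 0 neg_zero).eventually hline)
  obtain ⟨t, ⟨hplus, hminus⟩, ht⟩ :=
    ((hboth.filter_mono nhdsWithin_le_nhds).and self_mem_nhdsWithin).exists (f := 𝓝[>] 0)
  have := hx.2 hplus hminus ⟨1 / 2, 1 / 2, by norm_num, by norm_num, by norm_num, by module⟩
  simpa [ht.ne'] using this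

theorem exists_isUnit_submatrix_of_mem_extremePoints [Finite ι] [DecidableEq n] {M : Matrix ι n ℝ}
    {l u : ι → ℝ} {x : n → ℝ}
    (hx : x ∈ Set.extremePoints ℝ {x | ∀ r, l r ≤ (M *ᵥ x) r ∧ (M *ᵥ x) r ≤ u r}) :
    ∃ f : n → ι, (∀ k, (M *ᵥ x) (f k) = l (f k) ∨ (M *ᵥ x) (f k) = u (f k)) ∧
      IsUnit (M.submatrix f id) := by
  let T := {r // (M *ᵥ x) r = l r ∨ (M *ᵥ x) r = u r}
  let MT : Matrix T n ℝ := M.submatrix Subtype.val id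
  have hspan : Submodule.span ℝ (Set.range MT.row) = ⊤ := by
    have hinj : Function.Injective MT.mulVecLin := by
      rw [← LinearMap.ker_eq_bot, LinearMap.ker_eq_bot']
      exact fun y hy => eq_zero_of_mem_extremePoints hx fun r hr => congrFun hy ⟨r, hr⟩
    apply Submodule.eq_top_of_finrank_eq
    rw [← rank_eq_finrank_span_row]
    exact LinearMap.finrank_range_of_inj hinj
  obtain ⟨κ, a, -, hspan', hli⟩ := exists_linearIndependent' ℝ MT.row
  let B := Module.Basis.mk hli (by rw [hspan', hspan])
  let e := (Pi.basisFun ℝ n).indexEquiv B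
  exact ⟨fun k => (a (e k)).1, fun k => (a (e k)).2,
    linearIndependent_rows_iff_isUnit.mp (hli.comp e e.injective)⟩

theorem exists_intCast_of_mulVec [DecidableEq n] {N : Matrix n n ℤ} (hN : IsUnit N.det) {x : n → ℝ}
    (hx : ∀ i, ∃ z : ℤ, (N.map Int.cast *ᵥ x) i = z) (j : n) : ∃ z : ℤ, x j = z := by
  choose w hw using hx
  have hinv : N⁻¹.map (Int.cast : ℤ → ℝ) * N.map Int.cast = 1 := by
    have := congrArg (Matrix.map · (Int.castRingHom ℝ)) (nonsing_inv_mul N hN)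
    rwa [Matrix.map_mul, Matrix.map_one _ (map_zero _) (map_one _)] at this
  refine ⟨(N⁻¹ *ᵥ w) j, ?_⟩
  calc x j = (N⁻¹.map Int.cast *ᵥ (N.map Int.cast *ᵥ x)) j := by
        rw [mulVec_mulVec, hinv, one_mulVec]
    _ = (N⁻¹.map Int.cast *ᵥ fun i => (w i : ℝ)) j := by rw [funext hw]
    _ = _ := (RingHom.map_mulVec (Int.castRingHom ℝ) N⁻¹ w j).symm

theorem IsTotallyUnimodular.exists_intCast_of_mem_extremePoints [Finite ι] [DecidableEq n]
    {N : Matrix ι n ℤ} (hN : N.IsTotallyUnimodular) (a b : ι → ℤ) {x : n → ℝ}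
    (hx : x ∈ Set.extremePoints ℝ {x | ∀ r, (a r : ℝ) ≤ (N.map Int.cast *ᵥ x) r ∧
      (N.map Int.cast *ᵥ x) r ≤ b r}) (j : n) : ∃ z : ℤ, x j = z := by
  obtain ⟨f, htight, hunit⟩ := exists_isUnit_submatrix_of_mem_extremePoints hx
  refine exists_intCast_of_mulVec (N := N.submatrix f id) ?_ (fun k => ?_) j
  · obtain ⟨s, hs⟩ := (N.isTotallyUnimodular_iff_fintype.mp hN) n f id
    have hne : ((N.submatrix f id).det : ℝ) ≠ 0 := by
      rw [Int.cast_det]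
      exact ((isUnit_iff_isUnit_det _).mp hunit).ne_zero
    rw [Int.isUnit_iff, ← hs]
    rw [← hs] at hne
    cases s <;> simp_all
  · rcases htight k with h | h
    exacts [⟨a (f k), h⟩, ⟨b (f k), h⟩]

end Polyhedron

section BoxedSystem

variable [Fintype n]

def HasIntegralVertices (A : Matrix m n ℝ) : Prop :=
  ∀ (a b : m → ℤ) (c d : n → ℤ),
    ∀ x ∈ Set.extremePoints ℝ {x : n → ℝ | (∀ j, (c j : ℝ) ≤ x j ∧ x j ≤ (d j : ℝ)) ∧
      (∀ i, (a i : ℝ) ≤ (A *ᵥ x) i ∧ (A *ᵥ x) i ≤ (b i : ℝ))},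
    ∀ j, ∃ z : ℤ, x j = (z : ℝ)

theorem isCompact_setOf_le_and_mulVec_le (A : Matrix m n ℝ) (a b : m → ℝ) (c d : n → ℝ) :
    IsCompact {x : n → ℝ | (∀ j, c j ≤ x j ∧ x j ≤ d j) ∧
      ∀ i, a i ≤ (A *ᵥ x) i ∧ (A *ᵥ x) i ≤ b i} := by
  refine isCompact_Icc.of_isClosed_subset ?_ fun x hx => ⟨fun j => (hx.1 j).1, fun j => (hx.1 j).2⟩
  simp only [Set.ofPred_and, Set.ofPred_forall]
  exact .inter (isClosed_iInter fun j => .inter (isClosed_le (by fun_prop) (by fun_prop))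
      (isClosed_le (by fun_prop) (by fun_prop)))
    (isClosed_iInter fun i => .inter (isClosed_le (by fun_prop) (by fun_prop))
      (isClosed_le (by fun_prop) (by fun_prop)))

theorem IsTotallyUnimodular.hasIntegralVertices [Fintype m] [DecidableEq n] {Z : Matrix m n ℤ}
    (hZ : Z.IsTotallyUnimodular) : (Z.map (Int.cast : ℤ → ℝ)).HasIntegralVertices := by
  intro a b c d x hx
  refine hZ.one_fromRows.exists_intCast_of_mem_extremePoints (Sum.elim c a) (Sum.elim d b) ?_
  convert hx using 2
  ext y
  simp [fromRows_map, fromRows_mulVec, Sum.forall]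

theorem HasIntegralVertices.exists_subset_floor_le_sum_le_ceil [DecidableEq n]
    {A : Matrix m n ℝ} (hA : A.HasIntegralVertices) (C : Finset n) :
    ∃ C₁ ⊆ C, ∀ i, (⌊(∑ j ∈ C, A i j) / 2⌋ : ℝ) ≤ ∑ j ∈ C₁, A i j ∧
      ∑ j ∈ C₁, A i j ≤ ⌈(∑ j ∈ C, A i j) / 2⌉ := by
  let d : n → ℤ := fun j => if j ∈ C then 1 else 0
  have hhalf : (2⁻¹ : ℝ) • (fun j => if j ∈ C then 1 else 0) ∈ {x : n → ℝ |
      (∀ j, ((0 : n → ℤ) j : ℝ) ≤ x j ∧ x j ≤ d j) ∧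
      ∀ i, (⌊(∑ j ∈ C, A i j) / 2⌋ : ℝ) ≤ (A *ᵥ x) i ∧ (A *ᵥ x) i ≤ ⌈(∑ j ∈ C, A i j) / 2⌉} := by
    refine ⟨fun j => ?_, fun i => ?_⟩
    · by_cases hj : j ∈ C <;> norm_num [d, hj]
    · rw [mulVec_smul, Pi.smul_apply, mulVec_boole_apply, smul_eq_mul, inv_mul_eq_div]
      exact ⟨Int.floor_le _, Int.le_ceil _⟩
  obtain ⟨z, hz⟩ := (isCompact_setOf_le_and_mulVec_le A _ _ _ _).extremePoints_nonempty ⟨_, hhalf⟩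
  have hint := hA _ _ 0 d z hz
  obtain ⟨C₁, hC₁, rfl⟩ : ∃ C₁ ⊆ C, z = fun j => if j ∈ C₁ then 1 else 0 := by
    refine ⟨C.filter (z · = 1), Finset.filter_subset _ _, funext fun j => ?_⟩
    obtain ⟨k, hk⟩ := hint j
    have hbox := hz.1.1 j
    by_cases hj : j ∈ C <;>
      simp only [d, Finset.mem_filter, hj, true_and, false_and, if_true, if_false, Pi.zero_apply,
        hk] at hbox ⊢ <;>
      norm_cast at hbox ⊢ <;> (try split_ifs) <;> omega
  exact ⟨C₁, hC₁, fun i => by simpa only [mulVec_boole_apply] using hz.1.2 i⟩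

theorem HasIntegralVertices.isGhouilaHouri [DecidableEq n] {Z : Matrix m n ℤ}
    (hZ : (Z.map (Int.cast : ℤ → ℝ)).HasIntegralVertices) : Z.IsGhouilaHouri := by
  intro C _
  obtain ⟨C₁, hC₁, hsum⟩ := hZ.exists_subset_floor_le_sum_le_ceil C
  refine ⟨C₁, C \ C₁, Finset.union_sdiff_of_subset hC₁, Finset.disjoint_sdiff, fun i => ?_⟩
  obtain ⟨hlo, hhi⟩ := hsum i
  simp only [map_apply, ← Int.cast_sum, Int.cast_le, Int.floor_le_iff, Int.le_ceil_iff] at hlo hhi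
  have hlo' : ∑ j ∈ C, Z i j < 2 * ∑ j ∈ C₁, Z i j + 2 := by
    exact_mod_cast (by linarith : ((∑ j ∈ C, Z i j : ℤ) : ℝ) < 2 * ∑ j ∈ C₁, Z i j + 2)
  have hhi' : 2 * ∑ j ∈ C₁, Z i j - 2 < ∑ j ∈ C, Z i j := by
    exact_mod_cast (by linarith : 2 * ((∑ j ∈ C₁, Z i j : ℤ) : ℝ) - 2 < ∑ j ∈ C, Z i j)
  rw [Finset.sum_sdiff_eq_sub hC₁, SignType.mem_range_cast_iff]
  omega

end BoxedSystem

end Matrix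

/-- **Schrijver, Theorem 19.3.** Let `A` be an `m × n` real matrix all of whose entries lie
in `{-1, 0, +1}`. Then: for all integral vectors `a, b ∈ ℤ^m` and `c, d ∈ ℤ^n`, every
extreme point of the polyhedron `{x ∈ ℝ^n : c ≤ x ≤ d, a ≤ Ax ≤ b}` is integral, if and
only if for each nonempty collection `C` of columns of `A` there exist two disjoint subsets
`C₁` and `C₂` with `C₁ ∪ C₂ = C` such that the sum of the columns in `C₁` minus the sum of
the columns in `C₂` is a vector with all entries in `{-1, 0, +1}`. -/
theorem schrijver_19_3 (m n : ℕ) (A : Matrix (Fin m) (Fin n) ℝ)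
    (hA : ∀ i j, A i j = -1 ∨ A i j = 0 ∨ A i j = 1) :
    (∀ (a b : Fin m → ℤ) (c d : Fin n → ℤ),
        ∀ x ∈ Set.extremePoints ℝ {x : Fin n → ℝ |
            (∀ j, (c j : ℝ) ≤ x j ∧ x j ≤ (d j : ℝ)) ∧
            (∀ i, (a i : ℝ) ≤ A.mulVec x i ∧ A.mulVec x i ≤ (b i : ℝ))},
          ∀ j, ∃ z : ℤ, x j = (z : ℝ)) ↔
      (∀ C : Finset (Fin n), C.Nonempty →
        ∃ C₁ C₂ : Finset (Fin n), C₁ ∪ C₂ = C ∧ Disjoint C₁ C₂ ∧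
          ∀ i, ((∑ j ∈ C₁, A i j) - (∑ j ∈ C₂, A i j) = -1 ∨
                (∑ j ∈ C₁, A i j) - (∑ j ∈ C₂, A i j) = 0 ∨
                (∑ j ∈ C₁, A i j) - (∑ j ∈ C₂, A i j) = 1)) := by
  obtain ⟨Z, rfl⟩ : ∃ Z : Matrix (Fin m) (Fin n) ℤ, Z.map Int.cast = A :=
    ⟨A.map round, by ext i j; rcases hA i j with h | h | h <;> norm_num [h, round_eq]⟩
  have key : (Z.map (Int.cast : ℤ → ℝ)).HasIntegralVertices ↔
      (Z.map (Int.cast : ℤ → ℝ)).IsGhouilaHouri := by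
    rw [isGhouilaHouri_map_intCast_iff]
    exact ⟨HasIntegralVertices.isGhouilaHouri, fun h => h.isTotallyUnimodular.hasIntegralVertices⟩
  simpa only [HasIntegralVertices, IsGhouilaHouri, SignType.mem_range_cast_iff] using key
end

section
/- Let P > 0 be a real number and let g : ℝ → ℝ be a function that is convex on the interval [-P, P] and satisfies g(t) ≤ 𝟙{t ≠ 0} for all t ∈ [-P, P], where 𝟙{t ≠ 0} equals 0 at t = 0 and 1 otherwise. Then g(t) ≤ |t|/P for all t ∈ [-P, P]. Consequently, t ↦ |t|/P is the largest convex underestimator (convex envelope) of the indicator-of-nonzero function 𝟙{t ≠ 0} on [-P, P], since it is itself convex and satisfies |t|/P ≤ 𝟙{t ≠ 0} on [-P, P]. -/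
/-!
A convex `g` with `g 0 ≤ 0` satisfies `g (θ • x) ≤ θ * g x` for `θ ∈ [0, 1]`, by convexity on the
segment from `0` to `x`. Writing `t ∈ [-P, P]` as `(|t| / P) • (±P)` and using `g (±P) ≤ 1` gives
`g t ≤ |t| / P`.
-/

open Set

theorem ConvexOn.map_smul_le_mul_of_map_zero_nonpos {𝕜 E : Type*} [CommRing 𝕜] [LinearOrder 𝕜]
    [IsStrictOrderedRing 𝕜] [AddCommGroup E] [Module 𝕜 E] {s : Set E} {g : E → 𝕜}
    (hg : ConvexOn 𝕜 s g) (h0 : (0 : E) ∈ s) (hg0 : g 0 ≤ 0) {x : E} (hx : x ∈ s) {θ : 𝕜}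
    (hθ₀ : 0 ≤ θ) (hθ₁ : θ ≤ 1) : g (θ • x) ≤ θ * g x := by
  have hseg := hg.2 hx h0 hθ₀ (sub_nonneg.2 hθ₁) (add_sub_cancel θ 1)
  simp only [smul_zero, add_zero, smul_eq_mul] at hseg
  nlinarith [mul_nonneg (sub_nonneg.2 hθ₁) (neg_nonneg.2 hg0)]

theorem le_abs_div_of_convexOn_Icc {P : ℝ} (hP : 0 < P) {g : ℝ → ℝ}
    (hg : ConvexOn ℝ (Icc (-P) P) g) (hg0 : g 0 ≤ 0) (hgP : g P ≤ 1) (hgnP : g (-P) ≤ 1)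
    {t : ℝ} (ht : t ∈ Icc (-P) P) : g t ≤ |t| / P := by
  have h0 : (0 : ℝ) ∈ Icc (-P) P := ⟨by linarith, hP.le⟩
  have hθ₀ : 0 ≤ |t| / P := by positivity
  have hθ₁ : |t| / P ≤ 1 := (div_le_one hP).2 (abs_le.2 ht)
  rcases le_or_gt 0 t with ht0 | ht0
  · have hPmem : P ∈ Icc (-P) P := ⟨by linarith, le_rfl⟩
    have hbound := hg.map_smul_le_mul_of_map_zero_nonpos h0 hg0 hPmem hθ₀ hθ₁
    rw [smul_eq_mul, div_mul_cancel₀ _ hP.ne', abs_of_nonneg ht0] at hbound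
    rw [abs_of_nonneg ht0] at hθ₀ ⊢
    nlinarith
  · have hPmem : -P ∈ Icc (-P) P := ⟨le_rfl, by linarith⟩
    have hbound := hg.map_smul_le_mul_of_map_zero_nonpos h0 hg0 hPmem hθ₀ hθ₁
    rw [smul_eq_mul, mul_neg, div_mul_cancel₀ _ hP.ne', abs_of_neg ht0, neg_neg] at hbound
    rw [abs_of_neg ht0] at hθ₀ ⊢
    nlinarith

theorem convexOn_abs_div {s : Set ℝ} (hs : Convex ℝ s) {P : ℝ} (hP : 0 ≤ P) :
    ConvexOn ℝ s (fun t => |t| / P) := by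
  simpa only [smul_eq_mul, Real.norm_eq_abs, div_eq_inv_mul] using
    (convexOn_norm hs).smul (inv_nonneg.2 hP)

theorem abs_div_le_ite_ne_zero {P t : ℝ} (hP : 0 < P) (ht : t ∈ Icc (-P) P) :
    |t| / P ≤ if t ≠ 0 then (1 : ℝ) else 0 := by
  by_cases h : t = 0
  · simp [h]
  · rw [if_pos h]
    exact (div_le_one hP).2 (abs_le.2 ht)

/-- Let `P > 0` and let `g : ℝ → ℝ` be convex on `[-P, P]` with `g(t) ≤ 𝟙{t ≠ 0}` on
`[-P, P]`. Then `g(t) ≤ |t|/P` on `[-P, P]`. Moreover `t ↦ |t|/P` is itself convex on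
`[-P, P]` and satisfies `|t|/P ≤ 𝟙{t ≠ 0}` there, so it is the largest convex
underestimator (the convex envelope) of `𝟙{t ≠ 0}` on `[-P, P]`. -/
theorem convex_envelope_of_indicator (P : ℝ) (hP : 0 < P) (g : ℝ → ℝ)
    (hg : ConvexOn ℝ (Set.Icc (-P) P) g)
    (hle : ∀ t ∈ Set.Icc (-P) P, g t ≤ (if t ≠ 0 then (1 : ℝ) else 0)) :
    (∀ t ∈ Set.Icc (-P) P, g t ≤ |t| / P) ∧
      ConvexOn ℝ (Set.Icc (-P) P) (fun t => |t| / P) ∧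
      (∀ t ∈ Set.Icc (-P) P, |t| / P ≤ (if t ≠ 0 then (1 : ℝ) else 0)) := by
  have hg0 : g 0 ≤ 0 := by simpa using hle 0 ⟨by linarith, hP.le⟩
  have hgP : g P ≤ 1 := by simpa [hP.ne'] using hle P ⟨by linarith, le_rfl⟩
  have hgnP : g (-P) ≤ 1 := by simpa [hP.ne'] using hle (-P) ⟨le_rfl, by linarith⟩
  exact ⟨fun t ht => le_abs_div_of_convexOn_Icc hP hg hg0 hgP hgnP ht,
    convexOn_abs_div (convex_Icc _ _) hP.le, fun t ht => abs_div_le_ite_ne_zero hP ht⟩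
end

section
/- Let P > 0 and γ ≥ 0 be real numbers and let g : ℝ → ℝ be a function that is convex on the interval [-P, P] and satisfies g(t) ≤ 𝟙{t ≠ 0} + γ|t| for all t ∈ [-P, P], where 𝟙{t ≠ 0} equals 0 at t = 0 and 1 otherwise. Then g(t) ≤ (1/P + γ)·|t| for all t ∈ [-P, P]. Consequently, t ↦ (1/P + γ)·|t| is the largest convex underestimator (convex envelope) of t ↦ 𝟙{t ≠ 0} + γ|t| on [-P, P], since it is itself convex and satisfies (1/P + γ)·|t| ≤ 𝟙{t ≠ 0} + γ|t| on [-P, P]. -/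
/-!
The hypothesis gives `g 0 ≤ 0` and `g (±P) ≤ 1 + γ P`. Every `t ∈ [-P, P]` lies on the chord from
`0` to `P` or to `-P`, at parameter `|t| / P`, so convexity bounds `g t` by the linear interpolation
`(|t| / P) (1 + γ P) = (1/P + γ) |t|`.
-/

open Set

theorem ConvexOn.map_smul_le_smul_of_map_zero_nonpos {E : Type*} [AddCommGroup E] [Module ℝ E]
    {s : Set E} {g : E → ℝ} (hg : ConvexOn ℝ s g) (h0 : (0 : E) ∈ s) (hg0 : g 0 ≤ 0)
    {x : E} (hx : x ∈ s) {θ : ℝ} (hθ₀ : 0 ≤ θ) (hθ₁ : θ ≤ 1) : g (θ • x) ≤ θ * g x := by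
  have h := hg.2 h0 hx (sub_nonneg.2 hθ₁) hθ₀ (sub_add_cancel 1 θ)
  simp only [smul_zero, zero_add, smul_eq_mul] at h
  nlinarith [mul_nonpos_of_nonneg_of_nonpos (sub_nonneg.2 hθ₁) hg0]

theorem ConvexOn.le_div_mul_abs_of_map_zero_nonpos {P M : ℝ} {g : ℝ → ℝ} (hP : 0 < P)
    (hg : ConvexOn ℝ (Icc (-P) P) g) (hg0 : g 0 ≤ 0) (hgl : g (-P) ≤ M) (hgr : g P ≤ M)
    {t : ℝ} (ht : t ∈ Icc (-P) P) : g t ≤ M / P * |t| := by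
  have h0 : (0 : ℝ) ∈ Icc (-P) P := ⟨by linarith, hP.le⟩
  have hθ₀ : 0 ≤ |t| / P := by positivity
  have hθ₁ : |t| / P ≤ 1 := (div_le_one hP).2 (abs_le.2 ht)
  have hM : |t| / P * M = M / P * |t| := by ring
  rcases le_or_gt 0 t with ht0 | ht0
  · have hst : (|t| / P) • P = t := by
      rw [smul_eq_mul, abs_of_nonneg ht0]; field_simp
    calc g t = g ((|t| / P) • P) := by rw [hst]
      _ ≤ |t| / P * g P := hg.map_smul_le_smul_of_map_zero_nonpos h0 hg0
          ⟨by linarith, le_rfl⟩ hθ₀ hθ₁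
      _ ≤ M / P * |t| := hM ▸ mul_le_mul_of_nonneg_left hgr hθ₀
  · have hst : (|t| / P) • (-P) = t := by
      rw [smul_eq_mul, abs_of_neg ht0]; field_simp
    calc g t = g ((|t| / P) • (-P)) := by rw [hst]
      _ ≤ |t| / P * g (-P) := hg.map_smul_le_smul_of_map_zero_nonpos h0 hg0
          ⟨le_rfl, by linarith⟩ hθ₀ hθ₁
      _ ≤ M / P * |t| := hM ▸ mul_le_mul_of_nonneg_left hgl hθ₀

theorem convexOn_const_mul_abs {c : ℝ} (hc : 0 ≤ c) {s : Set ℝ} (hs : Convex ℝ s) :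
    ConvexOn ℝ s (fun t => c * |t|) := by
  simpa [Real.norm_eq_abs] using (convexOn_norm hs).smul hc

theorem one_div_add_mul_abs_le_ite_add_mul_abs {P γ t : ℝ} (hP : 0 < P) (ht : |t| ≤ P) :
    (1 / P + γ) * |t| ≤ (if t ≠ 0 then (1 : ℝ) else 0) + γ * |t| := by
  split_ifs with h
  · have : |t| / P ≤ 1 := (div_le_one hP).2 ht
    rw [add_mul, one_div_mul_eq_div]
    linarith
  · simp [not_not.1 h]

/-- Let `P > 0`, `γ ≥ 0`, and let `g : ℝ → ℝ` be convex on `[-P, P]` with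
`g(t) ≤ 𝟙{t ≠ 0} + γ|t|` on `[-P, P]`. Then `g(t) ≤ (1/P + γ)·|t|` on `[-P, P]`.
Moreover `t ↦ (1/P + γ)·|t|` is itself convex on `[-P, P]` and satisfies
`(1/P + γ)·|t| ≤ 𝟙{t ≠ 0} + γ|t|` there, so it is the largest convex underestimator
(the convex envelope) of `t ↦ 𝟙{t ≠ 0} + γ|t|` on `[-P, P]`. -/
theorem convex_envelope_of_indicator_plus_abs (P γ : ℝ) (hP : 0 < P) (hγ : 0 ≤ γ)
    (g : ℝ → ℝ) (hg : ConvexOn ℝ (Set.Icc (-P) P) g)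
    (hle : ∀ t ∈ Set.Icc (-P) P, g t ≤ (if t ≠ 0 then (1 : ℝ) else 0) + γ * |t|) :
    (∀ t ∈ Set.Icc (-P) P, g t ≤ (1/P + γ) * |t|) ∧
      ConvexOn ℝ (Set.Icc (-P) P) (fun t => (1/P + γ) * |t|) ∧
      (∀ t ∈ Set.Icc (-P) P,
        (1/P + γ) * |t| ≤ (if t ≠ 0 then (1 : ℝ) else 0) + γ * |t|) := by
  have hg0 : g 0 ≤ 0 := by simpa using hle 0 ⟨by linarith, hP.le⟩
  have hgl : g (-P) ≤ 1 + γ * P := by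
    simpa [hP.ne', abs_of_pos hP] using hle (-P) ⟨le_rfl, by linarith⟩
  have hgr : g P ≤ 1 + γ * P := by
    simpa [hP.ne', abs_of_pos hP] using hle P ⟨by linarith, le_rfl⟩
  have hslope : (1 + γ * P) / P = 1 / P + γ := by field_simp
  refine ⟨fun t ht => ?_, convexOn_const_mul_abs (by positivity) (convex_Icc _ _),
    fun t ht => one_div_add_mul_abs_le_ite_add_mul_abs hP (abs_le.2 ht)⟩
  simpa [hslope] using hg.le_div_mul_abs_of_map_zero_nonpos hP hg0 hgl hgr ht
end

section
/- Let n ≥ 1 be an integer and P > 0 a real number, and let B = {y ∈ ℝ^n : ‖y‖∞ ≤ P}. If g : ℝ^n → ℝ is convex on B and satisfies g(y) ≤ card(y) for all y ∈ B, where card(y) is the number of nonzero components of y, then g(y) ≤ (1/P)·‖y‖₁ for all y ∈ B. Together with the underestimator property (1/P)·‖y‖₁ ≤ card(y) on B, this shows that the convex envelope of the cardinality function card on the ℓ∞ ball of radius P is y ↦ (1/P)·‖y‖₁. -/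
/-!
At the points of the box all of whose coordinates are `0` or `±P`, the scaled `ℓ₁` norm
`‖y‖₁ / P` equals `card y`. Any other point `y` has a coordinate `0 < |y a| < P`, and `y` lies on
the segment joining the points obtained by moving `y a` to `0` and to `P · sign (y a)`; along this
segment `‖·‖₁ / P` is affine, so convexity of `g` transfers the bound from the two endpoints, which
have one fractional coordinate fewer. Induction on the set of fractional coordinates concludes.
-/

open Finset Function

section Update

variable {ι : Type*} [DecidableEq ι]

lemma abs_update_le {P : ℝ} {y : ι → ℝ} (hy : ∀ i, |y i| ≤ P) (a : ι) {c : ℝ}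
    (hc : |c| ≤ P) (i : ι) : |update y a c i| ≤ P := by
  rcases eq_or_ne i a with rfl | hi
  · simpa using hc
  · simpa [hi] using hy i

lemma smul_update_zero_add_smul_update_div (y : ι → ℝ) (a : ι) {t : ℝ} (ht : t ≠ 0) :
    (1 - t) • update y a 0 + t • update y a (y a / t) = y := by
  ext i
  rcases eq_or_ne i a with rfl | hi
  · simp [mul_div_cancel₀ _ ht]
  · simp [hi]; ring

variable [Fintype ι]

lemma sum_abs_update_add (y : ι → ℝ) (a : ι) (c : ℝ) :
    ∑ i, |update y a c i| + |y a| = ∑ i, |y i| + |c| := by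
  simp only [apply_update (fun _ => abs), sum_update_of_mem (mem_univ a),
    ← add_sum_erase univ (fun i => |y i|) (mem_univ a), sdiff_singleton_eq_erase]
  ring

end Update

lemma abs_div_div_abs {x P : ℝ} (hx : x ≠ 0) (hP : 0 < P) : |x / (|x| / P)| = P := by
  rw [abs_div, abs_div, abs_abs, div_div_cancel₀ (abs_pos.mpr hx).ne', abs_of_pos hP]

lemma sum_abs_eq_mul_ncard_support {ι : Type*} [Fintype ι] {P : ℝ} {y : ι → ℝ}
    (hy : ∀ i, y i = 0 ∨ |y i| = P) : ∑ i, |y i| = P * (support y).ncard := by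
  classical
  rw [show support y = ↑(univ.filter (y · ≠ 0)) by ext; simp, Set.ncard_coe_finset,
    card_eq_sum_ones, Nat.cast_sum, mul_sum, sum_filter]
  refine sum_congr rfl fun i _ => ?_
  by_cases h : y i = 0
  · simp [h]
  · simp [h, (hy i).resolve_left h]

namespace ConvexOn

variable {ι : Type*} [Fintype ι] [DecidableEq ι] {P : ℝ} {g : (ι → ℝ) → ℝ}

lemma le_one_div_mul_sum_abs_of_update (hP : 0 < P)
    (hg : ConvexOn ℝ {y : ι → ℝ | ∀ i, |y i| ≤ P} g) {y : ι → ℝ} (hy : ∀ i, |y i| ≤ P) {a : ι}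
    (hya : y a ≠ 0) (h₀ : g (update y a 0) ≤ 1 / P * ∑ i, |update y a 0 i|)
    (h₁ : g (update y a (y a / (|y a| / P))) ≤
      1 / P * ∑ i, |update y a (y a / (|y a| / P)) i|) :
    g y ≤ 1 / P * ∑ i, |y i| := by
  set t := |y a| / P
  have ht : 0 < t := by positivity
  have ht₁ : t ≤ 1 := (div_le_one hP).mpr (hy a)
  have hc : |y a / t| = P := abs_div_div_abs hya hP
  have hsum₀ := sum_abs_update_add y a 0
  have hsum₁ := sum_abs_update_add y a (y a / t)
  rw [abs_zero, add_zero] at hsum₀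
  rw [hc] at hsum₁
  calc g y = g ((1 - t) • update y a 0 + t • update y a (y a / t)) := by
        rw [smul_update_zero_add_smul_update_div y a ht.ne']
    _ ≤ (1 - t) * g (update y a 0) + t * g (update y a (y a / t)) :=
        hg.2 (abs_update_le hy a (by simpa using hP.le)) (abs_update_le hy a hc.le)
          (by linarith) ht.le (by ring)
    _ ≤ (1 - t) * (1 / P * ∑ i, |update y a 0 i|) +
          t * (1 / P * ∑ i, |update y a (y a / t) i|) := by
        gcongr
    _ = 1 / P * ∑ i, |y i| := by
        rw [eq_sub_of_add_eq hsum₀, eq_sub_of_add_eq hsum₁]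
        field_simp
        linarith [div_mul_cancel₀ |y a| hP.ne']

lemma le_one_div_mul_sum_abs_of_forall_notMem (hP : 0 < P)
    (hg : ConvexOn ℝ {y : ι → ℝ | ∀ i, |y i| ≤ P} g)
    (hle : ∀ y ∈ {y : ι → ℝ | ∀ i, |y i| ≤ P}, g y ≤ ((support y).ncard : ℝ)) (s : Finset ι) :
    ∀ y : ι → ℝ, (∀ i, |y i| ≤ P) → (∀ i ∉ s, y i = 0 ∨ |y i| = P) →
      g y ≤ 1 / P * ∑ i, |y i| := by
  induction s using Finset.induction_on with
  | empty =>
    intro y hy hvert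
    rw [sum_abs_eq_mul_ncard_support fun i => hvert i (notMem_empty i), ← mul_assoc,
      one_div_mul_cancel hP.ne', one_mul]
    exact hle y hy
  | insert a s _ ih =>
    intro y hy hvert
    have hvert_update {c : ℝ} (hc : c = 0 ∨ |c| = P) (i : ι) (hi : i ∉ s) :
        update y a c i = 0 ∨ |update y a c i| = P := by
      rcases eq_or_ne i a with rfl | hia
      · simpa using hc
      · simpa [hia] using hvert i (by simp [hi, hia])
    by_cases hya : y a = 0 ∨ |y a| = P
    · refine ih y hy fun i hi => ?_
      rcases eq_or_ne i a with rfl | hia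
      · exact hya
      · exact hvert i (by simp [hi, hia])
    have hya₀ : y a ≠ 0 := fun h => hya (.inl h)
    have hc := abs_div_div_abs hya₀ hP
    exact hg.le_one_div_mul_sum_abs_of_update hP hy hya₀
      (ih _ (abs_update_le hy a (by simpa using hP.le)) (hvert_update (.inl rfl)))
      (ih _ (abs_update_le hy a hc.le) (hvert_update (.inr hc)))

end ConvexOn

theorem convex_underestimators_of_card_below_scaled_l1_general (n : ℕ)
    (P : ℝ) (hP : 0 < P) (B : Set (Fin n → ℝ)) (hB : B = {y | ∀ i, |y i| ≤ P})
    (g : (Fin n → ℝ) → ℝ) (hg : ConvexOn ℝ B g)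
    (hle : ∀ y ∈ B, g y ≤ ((Function.support y).ncard : ℝ)) :
    ∀ y ∈ B, g y ≤ (1/P) * ∑ i, |y i| := by
  subst hB
  exact fun y hy => hg.le_one_div_mul_sum_abs_of_forall_notMem hP hle univ y hy (by simp)

/-- Let `n ≥ 1`, `P > 0`, and `B = {y ∈ ℝ^n : ‖y‖∞ ≤ P}`. If `g : ℝ^n → ℝ` is convex on
`B` and satisfies `g(y) ≤ card(y)` for all `y ∈ B` (where `card(y)` is the number of
nonzero components of `y`), then `g(y) ≤ (1/P)·‖y‖₁` for all `y ∈ B`. Together with the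
underestimator property `(1/P)·‖y‖₁ ≤ card(y)` on `B`, this shows that the convex
envelope of `card` on the ℓ∞ ball of radius `P` is `y ↦ (1/P)·‖y‖₁`. -/
theorem convex_underestimators_of_card_below_scaled_l1 (n : ℕ) (hn : 1 ≤ n)
    (P : ℝ) (hP : 0 < P) (B : Set (Fin n → ℝ)) (hB : B = {y | ∀ i, |y i| ≤ P})
    (g : (Fin n → ℝ) → ℝ) (hg : ConvexOn ℝ B g)
    (hle : ∀ y ∈ B, g y ≤ ((Function.support y).ncard : ℝ)) :
    ∀ y ∈ B, g y ≤ (1/P) * ∑ i, |y i| :=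
  convex_underestimators_of_card_below_scaled_l1_general n P hP B hB g hg hle
end

section
/- Let n ≥ 1 be an integer, P > 0 and γ > 0 real numbers, and let B = {y ∈ ℝ^n : ‖y‖∞ ≤ P}. Define f : ℝ^n → ℝ by f(y) = card(y) + γ‖y‖₁, where card(y) is the number of nonzero components of y. Then the convex envelope of f on B is y ↦ (1/P + γ)·‖y‖₁; that is: (i) the function y ↦ (1/P + γ)·‖y‖₁ is convex and satisfies (1/P + γ)·‖y‖₁ ≤ f(y) for all y ∈ B, and (ii) every function g : ℝ^n → ℝ that is convex on B and satisfies g(y) ≤ f(y) on B also satisfies g(y) ≤ (1/P + γ)·‖y‖₁ on B. In this sense, minimizing ‖y‖₁ is the best convex approximation from below to minimizing card(y) + γ‖y‖₁ over any feasible set contained in B. -/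
/-!
On the box `‖y‖∞ ≤ P` we have `‖y‖₁ ≤ P · card y`, with equality at the points whose
coordinates all lie in `{0, ±P}`; there `f` coincides with `(1/P + γ)‖·‖₁`. Every point of the
box is reached from such points by splitting one coordinate at a time, writing `y` as the
convex combination of `y` with `yᵢ` replaced by `0` and by `±P`, with weight `|yᵢ|/P` on the
latter. Along each such segment `‖·‖₁` is affine, so by induction any convex minorant of `f`
stays below `(1/P + γ)‖·‖₁`.
-/

open Finset Function

theorem convex_setOf_forall_abs_le {ι : Type*} (P : ℝ) :
    Convex ℝ {y : ι → ℝ | ∀ i, |y i| ≤ P} := by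
  simpa [Set.pi, abs_le] using convex_pi (s := Set.univ) fun (_ : ι) _ => convex_Icc (-P) P

theorem exists_abs_eq_and_eq_abs_div_mul {P : ℝ} (hP : 0 < P) (x : ℝ) :
    ∃ v, |v| = P ∧ x = |x| / P * v := by
  rcases le_or_gt 0 x with hx | hx
  · exact ⟨P, abs_of_pos hP, by rw [abs_of_nonneg hx, div_mul_cancel₀ _ hP.ne']⟩
  · exact ⟨-P, by rw [abs_neg, abs_of_pos hP], by rw [abs_of_neg hx]; field_simp⟩

section

variable {ι : Type*} [Fintype ι]

theorem convexOn_sum_abs : ConvexOn ℝ Set.univ (fun y : ι → ℝ => ∑ i, |y i|) := by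
  refine ⟨convex_univ, fun x _ y _ a b ha hb _ => ?_⟩
  simp only [Pi.add_apply, Pi.smul_apply, smul_eq_mul, mul_sum, ← sum_add_distrib]
  gcongr with i
  calc |a * x i + b * y i| ≤ |a * x i| + |b * y i| := abs_add_le _ _
    _ = a * |x i| + b * |y i| := by rw [abs_mul, abs_mul, abs_of_nonneg ha, abs_of_nonneg hb]

theorem sum_abs_eq_sum_support (y : ι → ℝ) [Fintype (support y)] :
    ∑ i, |y i| = ∑ i ∈ (support y).toFinset, |y i| :=
  (sum_subset (subset_univ _) (by simp)).symm

theorem sum_abs_le_ncard_support_mul {P : ℝ} {y : ι → ℝ} (hy : ∀ i, |y i| ≤ P) :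
    ∑ i, |y i| ≤ (support y).ncard * P := by
  classical
  rw [sum_abs_eq_sum_support, Set.ncard_eq_toFinset_card', ← nsmul_eq_mul]
  exact sum_le_card_nsmul _ _ _ fun i _ => hy i

theorem sum_abs_eq_ncard_support_mul {P : ℝ} {y : ι → ℝ} (hy : ∀ i, y i = 0 ∨ |y i| = P) :
    ∑ i, |y i| = (support y).ncard * P := by
  classical
  rw [sum_abs_eq_sum_support, Set.ncard_eq_toFinset_card', ← nsmul_eq_mul]
  exact sum_eq_card_nsmul fun i hi => (hy i).resolve_left (by simpa using hi)

theorem sum_abs_update [DecidableEq ι] (y : ι → ℝ) (i : ι) (a : ℝ) :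
    ∑ j, |update y i a j| = ∑ j, |y j| - |y i| + |a| := by
  rw [← add_sum_erase _ _ (mem_univ i), ← add_sum_erase _ _ (mem_univ i), update_self]
  rw [sum_congr rfl fun j hj => by rw [update_of_ne (ne_of_mem_erase hj)]]
  ring

theorem le_mul_sum_abs_of_convexOn_of_le_at_vertices {P c : ℝ} {g : (ι → ℝ) → ℝ} (hP : 0 < P)
    (hg : ConvexOn ℝ {y | ∀ i, |y i| ≤ P} g)
    (hvert : ∀ z : ι → ℝ, (∀ i, z i = 0 ∨ |z i| = P) → g z ≤ c * ∑ i, |z i|)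
    {y : ι → ℝ} (hy : ∀ i, |y i| ≤ P) : g y ≤ c * ∑ i, |y i| := by
  classical
  suffices key : ∀ s : Finset ι, ∀ y : ι → ℝ, (∀ i, |y i| ≤ P) →
      (∀ i ∉ s, y i = 0 ∨ |y i| = P) → g y ≤ c * ∑ i, |y i| from
    key univ y hy (by simp)
  intro s
  induction s using Finset.induction_on with
  | empty => exact fun y _ hy => hvert y fun i => hy i (notMem_empty i)
  | insert i s _ ih =>
    intro y hyB hys
    obtain ⟨v, hv, hyv⟩ := exists_abs_eq_and_eq_abs_div_mul hP (y i)
    set t := |y i| / P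
    have ht : t ≤ 1 := (div_le_one hP).2 (hyB i)
    have hsplit : y = (1 - t) • update y i 0 + t • update y i v := by
      ext j
      rcases eq_or_ne j i with rfl | hj
      · simp [← hyv]
      · simp only [Pi.add_apply, Pi.smul_apply, update_of_ne hj, smul_eq_mul]
        ring
    have hmem : ∀ a, |a| ≤ P → update y i a ∈ {y : ι → ℝ | ∀ i, |y i| ≤ P} := fun a ha =>
      (forall_update_iff y fun _ b => |b| ≤ P).2 ⟨ha, fun j _ => hyB j⟩
    have hupdate : ∀ a, a = 0 ∨ |a| = P → g (update y i a) ≤ c * ∑ j, |update y i a j| := by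
      intro a ha
      refine ih _ (hmem a (ha.elim (fun h => by simp [h, hP.le]) le_of_eq)) fun j hj => ?_
      rcases eq_or_ne j i with rfl | hji
      · simpa using ha
      · simpa [hji] using hys j (by simp [hji, hj])
    calc g y = g ((1 - t) • update y i 0 + t • update y i v) := by rw [← hsplit]
      _ ≤ (1 - t) • g (update y i 0) + t • g (update y i v) :=
        hg.2 (hmem 0 (by simp [hP.le])) (hmem v hv.le) (by linarith) (by positivity) (by ring)
      _ ≤ (1 - t) * (c * ∑ j, |update y i 0 j|) + t * (c * ∑ j, |update y i v j|) := by
        simp only [smul_eq_mul]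
        gcongr
        exacts [hupdate 0 (.inl rfl), hupdate v (.inr hv)]
      _ = c * ∑ j, |y j| := by
        rw [sum_abs_update, sum_abs_update, abs_zero, hv, show |y i| = t * P by
          rw [div_mul_cancel₀ _ hP.ne']]
        ring

end

theorem convex_envelope_of_card_plus_l1_general (n : ℕ)
    (P γ : ℝ) (hP : 0 < P) (hγ : 0 < γ)
    (B : Set (Fin n → ℝ)) (hB : B = {y | ∀ i, |y i| ≤ P})
    (f : (Fin n → ℝ) → ℝ)
    (hf : ∀ y, f y = ((Function.support y).ncard : ℝ) + γ * ∑ i, |y i|) :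
    (ConvexOn ℝ B (fun y => (1/P + γ) * ∑ i, |y i|) ∧
      ∀ y ∈ B, (1/P + γ) * (∑ i, |y i|) ≤ f y) ∧
    (∀ g : (Fin n → ℝ) → ℝ, ConvexOn ℝ B g → (∀ y ∈ B, g y ≤ f y) →
      ∀ y ∈ B, g y ≤ (1/P + γ) * ∑ i, |y i|) := by
  subst hB
  have hc : 0 ≤ 1 / P + γ := by positivity
  refine ⟨⟨(convexOn_sum_abs.smul hc).subset (Set.subset_univ _) (convex_setOf_forall_abs_le P),
    fun y hy => ?_⟩, fun g hg hgf y hy => ?_⟩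
  · have hcard := sum_abs_le_ncard_support_mul hy
    rw [hf, add_mul, one_div_mul_eq_div]
    gcongr
    rwa [div_le_iff₀ hP]
  · refine le_mul_sum_abs_of_convexOn_of_le_at_vertices hP hg (fun z hz => ?_) hy
    have hzB : ∀ i, |z i| ≤ P := fun i => (hz i).elim (fun h => by simp [h, hP.le]) le_of_eq
    refine (hgf z hzB).trans_eq ?_
    rw [hf, sum_abs_eq_ncard_support_mul hz]
    field_simp

/-- **Proposition 2 of the paper.** Let `n ≥ 1`, `P > 0`, `γ > 0`, and
`B = {y ∈ ℝ^n : ‖y‖∞ ≤ P}`. Define `f(y) = card(y) + γ‖y‖₁` where `card(y)` is the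
number of nonzero components of `y`. Then the convex envelope of `f` on `B` is
`y ↦ (1/P + γ)·‖y‖₁`: (i) this function is convex and underestimates `f` on `B`, and
(ii) every function convex on `B` that underestimates `f` on `B` also lies below it
on `B`. -/
theorem convex_envelope_of_card_plus_l1 (n : ℕ) (hn : 1 ≤ n)
    (P γ : ℝ) (hP : 0 < P) (hγ : 0 < γ)
    (B : Set (Fin n → ℝ)) (hB : B = {y | ∀ i, |y i| ≤ P})
    (f : (Fin n → ℝ) → ℝ)
    (hf : ∀ y, f y = ((Function.support y).ncard : ℝ) + γ * ∑ i, |y i|) :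
    (ConvexOn ℝ B (fun y => (1/P + γ) * ∑ i, |y i|) ∧
      ∀ y ∈ B, (1/P + γ) * (∑ i, |y i|) ≤ f y) ∧
    (∀ g : (Fin n → ℝ) → ℝ, ConvexOn ℝ B g → (∀ y ∈ B, g y ≤ f y) →
      ∀ y ∈ B, g y ≤ (1/P + γ) * ∑ i, |y i|) :=
  convex_envelope_of_card_plus_l1_general n P γ hP hγ B hB f hf
end
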